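/- Let R be a commutative ring and r₁, r₂ ∈ R^* units with r₁ + r₂ ∈ R^*. Then in K^M_2(R[ε]) one has 2·{1 + r₁·ε, 1 + r₂·ε} = 0. -/

import Mathlib

open TrivSqZeroExt

/-- The relations defining the Milnor K-group of a commutative ring `S`:
multilinearity relations and Steinberg relations (a generator `r₁ ⊗ … ⊗ r_n` with some
pair of consecutive entries summing to `1`). -/
def milnorRelSet (S : Type*) [CommRing S] (n : ℕ) : Set (FreeAbelianGroup (Fin n → Sˣ)) :=
  {x | ∃ (f : Fin n → Sˣ) (i : Fin n) (u v : Sˣ),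
      x = FreeAbelianGroup.of (Function.update f i (u * v))
        - FreeAbelianGroup.of (Function.update f i u)
        - FreeAbelianGroup.of (Function.update f i v)} ∪
  {x | ∃ (f : Fin n → Sˣ) (i j : Fin n), (i : ℕ) + 1 = (j : ℕ) ∧
      ((f i : S) + (f j : S) = 1) ∧ x = FreeAbelianGroup.of f}

/-- The `n`-th Milnor K-group of a commutative ring `S`: the quotient of `(Sˣ)^{⊗ n}`
(presented as the free abelian group on `n`-tuples of units, modulo multilinearity)
by the Steinberg relations. -/
def MilnorK (S : Type*) [CommRing S] (n : ℕ) : Type _ :=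
  FreeAbelianGroup (Fin n → Sˣ) ⧸ AddSubgroup.closure (milnorRelSet S n)

instance (S : Type*) [CommRing S] (n : ℕ) : AddCommGroup (MilnorK S n) :=
  QuotientAddGroup.Quotient.addCommGroup _

/-- The Milnor symbol `{r₁, …, r_n}`. -/
def milnorSymbol {S : Type*} [CommRing S] {n : ℕ} (f : Fin n → Sˣ) : MilnorK S n :=
  QuotientAddGroup.mk (FreeAbelianGroup.of f)

/-- Functoriality of Milnor K-groups in ring homomorphisms. -/
def MilnorK.map {S T : Type*} [CommRing S] [CommRing T] (φ : S →+* T) (n : ℕ) :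
    MilnorK S n →+ MilnorK T n := by
  refine QuotientAddGroup.lift _
    ((QuotientAddGroup.mk' (AddSubgroup.closure (milnorRelSet T n))).comp
      (FreeAbelianGroup.map (fun f => (Units.map (φ : S →* T)) ∘ f))) ?_
  intro x hx
  revert x hx
  rw [← SetLike.le_def, AddSubgroup.closure_le]
  rintro x (⟨f, i, u, v, rfl⟩ | ⟨f, i, j, hij, hsum, rfl⟩) <;>
    simp only [SetLike.mem_coe, AddMonoidHom.mem_ker, map_sub]
  · show milnorSymbol (Units.map (φ : S →* T) ∘ Function.update f i (u * v))
      - milnorSymbol (Units.map (φ : S →* T) ∘ Function.update f i u)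
      - milnorSymbol (Units.map (φ : S →* T) ∘ Function.update f i v) = (0 : MilnorK T n)
    unfold milnorSymbol
    change ((_ : FreeAbelianGroup (Fin n → Tˣ)) : FreeAbelianGroup (Fin n → Tˣ) ⧸
      AddSubgroup.closure (milnorRelSet T n)) - _ - _ = 0
    rw [← QuotientAddGroup.mk_sub, ← QuotientAddGroup.mk_sub, QuotientAddGroup.eq_zero_iff]
    refine AddSubgroup.subset_closure (Or.inl ⟨Units.map (φ : S →* T) ∘ f, i,
      Units.map (φ : S →* T) u, Units.map (φ : S →* T) v, ?_⟩)
    simp [Function.comp_update]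
  · show milnorSymbol (Units.map (φ : S →* T) ∘ f) = (0 : MilnorK T n)
    unfold milnorSymbol
    change ((_ : FreeAbelianGroup (Fin n → Tˣ)) : FreeAbelianGroup (Fin n → Tˣ) ⧸
      AddSubgroup.closure (milnorRelSet T n)) = 0
    rw [QuotientAddGroup.eq_zero_iff]
    refine AddSubgroup.subset_closure (Or.inr ⟨Units.map (φ : S →* T) ∘ f, i, j, hij, ?_, rfl⟩)
    simp only [Function.comp_apply, Units.coe_map, MonoidHom.coe_coe]
    rw [← map_add, hsum, map_one]

/-- The unit `1 + r·ε` of the dual numbers, with inverse `1 - r·ε`. -/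
def oneAddEps (R : Type*) [CommRing R] (r : R) : (DualNumber R)ˣ where
  val := 1 + inr r
  inv := 1 - inr r
  val_inv := by
    have h : (inr r : DualNumber R) * inr r = 0 := inr_mul_inr R r r
    ring_nf
    simp [pow_two, h]
  inv_val := by
    have h : (inr r : DualNumber R) * inr r = 0 := inr_mul_inr R r r
    ring_nf
    simp [pow_two, h]

/-- The `R`-algebra endomorphism `σ_a` of the dual numbers sending `ε` to `a·ε`. -/
def epsScale (R : Type*) [CommRing R] (a : R) : DualNumber R →+* DualNumber R where
  toFun x := inl x.fst + inr (a * x.snd)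
  map_one' := by simp
  map_mul' x y := by
    ext
    · simp
    · simp [snd_mul, smul_eq_mul, mul_comm, mul_add]
      ring
  map_zero' := by simp
  map_add' x y := by ext <;> simp [mul_add]


/-!
With `a = r₂/(r₁+r₂)` and `b = r₁/(r₁+r₂)` we have `a + b = 1`, and since `ε² = 0` also
`a(1 + r₁ε) + b(1 - r₂ε) = 1 = a(1 - r₁ε) + b(1 + r₂ε)`. Expanding the Steinberg relations
`{a x, b y⁻¹} = 0` and `{a x⁻¹, b y} = 0` (for `x = 1 + r₁ε`, `y = 1 + r₂ε`) bilinearly, the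
terms `{a, b}`, `{a, y}` and `{x, b}` cancel in the sum, which leaves `-2{x, y} = 0`.
-/

section MilnorK

variable {S : Type*} [CommRing S]

theorem milnorSymbol_update_mul {n : ℕ} (f : Fin n → Sˣ) (i : Fin n) (u v : Sˣ) :
    milnorSymbol (Function.update f i (u * v)) =
      milnorSymbol (Function.update f i u) + milnorSymbol (Function.update f i v) := by
  rw [← sub_eq_zero, ← sub_sub]
  exact (QuotientAddGroup.eq_zero_iff _).2
    (AddSubgroup.subset_closure (Or.inl ⟨f, i, u, v, rfl⟩))

theorem milnorSymbol_eq_zero_of_add_eq_one (u v : Sˣ) (h : (u : S) + v = 1) :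
    milnorSymbol ![u, v] = 0 :=
  (QuotientAddGroup.eq_zero_iff _).2
    (AddSubgroup.subset_closure (Or.inr ⟨![u, v], 0, 1, rfl, h, rfl⟩))

theorem milnorSymbol_mul_left (u v w : Sˣ) :
    milnorSymbol ![u * v, w] = milnorSymbol ![u, w] + milnorSymbol ![v, w] := by
  have h (x : Sˣ) : Function.update ![u, w] 0 x = ![x, w] := by
    ext i; fin_cases i <;> simp
  simpa [h] using milnorSymbol_update_mul ![u, w] 0 u v

theorem milnorSymbol_mul_right (u v w : Sˣ) :
    milnorSymbol ![u, v * w] = milnorSymbol ![u, v] + milnorSymbol ![u, w] := by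
  have h (x : Sˣ) : Function.update ![u, v] 1 x = ![u, x] := by
    ext i; fin_cases i <;> simp
  simpa [h] using milnorSymbol_update_mul ![u, v] 1 v w

theorem milnorSymbol_inv_left (u w : Sˣ) : milnorSymbol ![u⁻¹, w] = -milnorSymbol ![u, w] := by
  have h₁ : milnorSymbol ![(1 : Sˣ), w] = 0 := by
    simpa using milnorSymbol_mul_left (1 : Sˣ) 1 w
  rw [eq_neg_iff_add_eq_zero, ← milnorSymbol_mul_left, inv_mul_cancel, h₁]

theorem milnorSymbol_inv_right (u w : Sˣ) : milnorSymbol ![u, w⁻¹] = -milnorSymbol ![u, w] := by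
  have h₁ : milnorSymbol ![u, (1 : Sˣ)] = 0 := by
    simpa using milnorSymbol_mul_right u (1 : Sˣ) 1
  rw [eq_neg_iff_add_eq_zero, ← milnorSymbol_mul_right, inv_mul_cancel, h₁]

theorem two_zsmul_milnorSymbol_eq_zero {a b x y : Sˣ} (hab : (a : S) + b = 1)
    (h₁ : ((a * x : Sˣ) : S) + (b * y⁻¹ : Sˣ) = 1)
    (h₂ : ((a * x⁻¹ : Sˣ) : S) + (b * y : Sˣ) = 1) :
    (2 : ℤ) • milnorSymbol ![x, y] = 0 := by
  have e₁ := milnorSymbol_eq_zero_of_add_eq_one _ _ h₁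
  have e₂ := milnorSymbol_eq_zero_of_add_eq_one _ _ h₂
  simp only [milnorSymbol_mul_left, milnorSymbol_mul_right, milnorSymbol_inv_left,
    milnorSymbol_inv_right, milnorSymbol_eq_zero_of_add_eq_one a b hab] at e₁ e₂
  linear_combination (norm := module) -e₁ - e₂

end MilnorK

section DualNumber

variable {R : Type*} [CommRing R]

theorem oneAddEps_neg (r : R) : oneAddEps R (-r) = (oneAddEps R r)⁻¹ :=
  eq_inv_of_mul_eq_one_left <| Units.ext <| by
    simp [oneAddEps, add_mul, mul_add]

theorem algebraMap_mul_oneAddEps_add_eq_one (a b s t : R) (hab : a + b = 1)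
    (hst : a * s + b * t = 0) :
    algebraMap R (DualNumber R) a * (oneAddEps R s : DualNumber R) +
      algebraMap R (DualNumber R) b * (oneAddEps R t : DualNumber R) = 1 := by
  ext
  · simp [oneAddEps, algebraMap_eq_inl, hab]
  · simp [oneAddEps, algebraMap_eq_inl, hst]

end DualNumber

/-- for units `r₁, r₂` of `R` with `r₁ + r₂` a unit,
`2·{1 + r₁ε, 1 + r₂ε} = 0` in `K^M_2(R[ε])`. -/
theorem stmt_12 (R : Type*) [CommRing R] (r₁ r₂ : Rˣ)
    (h : IsUnit ((r₁ : R) + (r₂ : R))) :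
    (2 : ℤ) • milnorSymbol ![oneAddEps R (r₁ : R), oneAddEps R (r₂ : R)]
      = (0 : MilnorK (DualNumber R) 2) := by
  obtain ⟨p, hp⟩ := h
  let ι : Rˣ →* (DualNumber R)ˣ := Units.map (algebraMap R (DualNumber R))
  have hab : ((r₂ * p⁻¹ : Rˣ) : R) + (r₁ * p⁻¹ : Rˣ) = 1 := by
    rw [← p.mul_inv, hp]; push_cast; ring
  refine two_zsmul_milnorSymbol_eq_zero (a := ι (r₂ * p⁻¹)) (b := ι (r₁ * p⁻¹)) ?_ ?_ ?_
  · simp only [ι, Units.coe_map, MonoidHom.coe_coe, ← map_add, hab, map_one]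
  · rw [← oneAddEps_neg]
    exact algebraMap_mul_oneAddEps_add_eq_one _ _ _ _ hab (by push_cast; ring)
  · rw [← oneAddEps_neg]
    exact algebraMap_mul_oneAddEps_add_eq_one _ _ _ _ hab (by push_cast; ring)
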